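/- arXiv:2412.15039 — 2 statements merged into one kernel-verified Lean document; each statement's English description precedes it below -/
import Mathlib

section
/- Let c = (F₁,…,F_ℓ, V, I) be a chain whose hypergraph C satisfies: for all sets W with (V(F₁) ∪ V(F_ℓ)) ∩ V ⊆ W ⊊ V, the template density satisfies ρ_{C,W} > ρ_F + ε². If |V| ≥ 1/ε³ and v(F) = m with ε sufficiently small relative to 1/m, then a contradiction arises; equivalently, whenever |V| ≥ 1/ε³, there exists a set W with (V(F₁) ∪ V(F_ℓ)) ∩ V ⊆ W ⊊ V and ρ_{C,W} ≤ ρ_F + ε². -/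
open Finset

/-- The vertex set (support) of a hypergraph given by its edge set. -/
def verts (A : Finset (Finset ℕ)) : Finset ℕ := A.sup id

/-- The edge set of the induced subhypergraph `A[U]`. -/
def ind (A : Finset (Finset ℕ)) (U : Finset ℕ) : Finset (Finset ℕ) := A.filter (· ⊆ U)

/-- The density of the template `(A[U], I)`, where `A[U]` carries the vertex set `U`:
`(e(A[U]) - e(A[I])) / (|U| - |I|)`, and `0` if `U = I`. -/
def dens (A : Finset (Finset ℕ)) (U I : Finset ℕ) : ℚ :=
  if U = I then 0
  else (((ind A U).card : ℚ) - ((ind A I).card : ℚ)) / ((U.card : ℚ) - (I.card : ℚ))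

/-- The density `ρ_{A,I}` of the template `(A, I)` (whose vertex set is `verts A ∪ I`). -/
def tdens (A : Finset (Finset ℕ)) (I : Finset ℕ) : ℚ := dens A (verts A ∪ I) I

/-- The `k`-density `ρ_A = (e(A) - 1)/(v(A) - k)` of a `k`-uniform hypergraph. -/
def kdens (k : ℕ) (A : Finset (Finset ℕ)) : ℚ :=
  ((A.card : ℚ) - 1) / (((verts A).card : ℚ) - (k : ℚ))

/-- The template `(A, I)` is strictly balanced: every proper subtemplate `(B, I) ⊆ (A, I)`
(`B = A[U]` with vertex set `U`, `I ⊆ U`, `V(B) = U ≠ I`, `B ≠ A`) has strictly smaller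
density. -/
def StrictBalT (A : Finset (Finset ℕ)) (I : Finset ℕ) : Prop :=
  ∀ U : Finset ℕ, I ⊆ U → U ⊂ verts A ∪ I → U ≠ I → dens A U I < tdens A I

/-- The union of the hypergraphs `B j` over `j ∈ s`. -/
def pUnion (B : ℕ → Finset (Finset ℕ)) (s : Finset ℕ) : Finset (Finset ℕ) := s.biUnion B

/-- `qfun B i = 1 + ∑_{j < i} (|B j| - 1)`. -/
def qfun (B : ℕ → Finset (Finset ℕ)) (i : ℕ) : ℕ :=
  1 + ∑ j ∈ Finset.range i, ((B j).card - 1)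

/-- `B 0, …, B (n-1)` is a vertex-separated loose path starting at `I`: there is an
enumeration `e 0, …, e (qfun B n - 1)` of the edges of `B 0 + … + B (n-1)` with `e 0 = I`,
each `B i` consisting of the block of edges with indices in `[qfun B i - 1, qfun B (i+1) - 1]`,
such that for each `0 < i < n` the vertex sets of `B 0 + … + B (i-1)` and of
`B i + … + B (n-1)` intersect exactly in the shared edge `e (qfun B i - 1)`. -/
def IsVSLoosePath (n : ℕ) (B : ℕ → Finset (Finset ℕ)) (I : Finset ℕ) : Prop :=
  ∃ e : ℕ → Finset ℕ,
    (∀ i < qfun B n, ∀ j < qfun B n, e i = e j → i = j) ∧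
    e 0 = I ∧
    (∀ i < n, B i =
      ((Finset.range (qfun B n)).filter
          (fun j => qfun B i - 1 ≤ j ∧ j ≤ qfun B (i + 1) - 1)).image e) ∧
    (∀ i, 0 < i → i < n →
      verts (pUnion B (Finset.range i)) ∩
          verts (pUnion B ((Finset.range n).filter (fun j => i ≤ j))) =
        e (qfun B i - 1))

/-- `B'` is a copy of `F`. -/
def IsCopy (F B' : Finset (Finset ℕ)) : Prop :=
  ∃ φ : ℕ → ℕ, Set.InjOn φ ↑(verts F) ∧ B' = F.image (fun f => f.image φ)

lemma subset_verts {A : Finset (Finset ℕ)} {g : Finset ℕ} (h : g ∈ A) : g ⊆ verts A :=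
  Finset.le_sup (f := id) h

lemma verts_mono {A B : Finset (Finset ℕ)} (h : A ⊆ B) : verts A ⊆ verts B :=
  le_iff_subset.mp (Finset.sup_mono h)

lemma verts_union (A B : Finset (Finset ℕ)) : verts (A ∪ B) = verts A ∪ verts B :=
  Finset.sup_union

lemma mem_verts_iff {A : Finset (Finset ℕ)} {a : ℕ} : a ∈ verts A ↔ ∃ g ∈ A, a ∈ g := by
  simp [verts, Finset.mem_sup]

lemma verts_image (φ : ℕ → ℕ) (F : Finset (Finset ℕ)) :
    verts (F.image (fun f => f.image φ)) = (verts F).image φ := by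
  ext a
  simp only [mem_verts_iff, Finset.mem_image]
  constructor
  · rintro ⟨g, ⟨f, hf, rfl⟩, ha⟩
    obtain ⟨b, hb, rfl⟩ := Finset.mem_image.mp ha
    exact ⟨b, ⟨f, hf, hb⟩, rfl⟩
  · rintro ⟨b, hb, rfl⟩
    obtain ⟨f, hf, hbf⟩ := hb
    exact ⟨f.image φ, ⟨f, hf, rfl⟩, Finset.mem_image_of_mem φ hbf⟩

lemma img_inj {φ : ℕ → ℕ} {S : Finset ℕ} (hinj : Set.InjOn φ ↑S) {g₁ g₂ : Finset ℕ}
    (h1 : g₁ ⊆ S) (h2 : g₂ ⊆ S) (h : g₁.image φ = g₂.image φ) : g₁ = g₂ := by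
  have key : ∀ a b : Finset ℕ, a ⊆ S → b ⊆ S → a.image φ = b.image φ → a ⊆ b := by
    intro a b ha hb hab x hx
    have : φ x ∈ b.image φ := hab ▸ Finset.mem_image_of_mem φ hx
    obtain ⟨y, hy, hyx⟩ := Finset.mem_image.mp this
    rwa [← hinj (hb hy) (ha hx) hyx]
  exact Finset.Subset.antisymm (key _ _ h1 h2 h) (key _ _ h2 h1 h.symm)

lemma copy_bound (k : ℕ) (F : Finset (Finset ℕ)) (hFk : ∀ e ∈ F, e.card = k)
    (hbal : ∀ f ∈ F, ∀ B' ⊆ F, tdens B' f ≤ kdens k F) (hρ : 0 ≤ kdens k F)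
    (φ : ℕ → ℕ) (hinj : Set.InjOn φ ↑(verts F)) (Bi : Finset (Finset ℕ))
    (hBi : Bi = F.image (fun f => f.image φ)) (V s : Finset ℕ) (hs : s ∈ Bi) :
    ((ind Bi V).card : ℚ) - (if s ⊆ V then 1 else 0) ≤
      kdens k F * (((V ∩ verts Bi).card : ℚ) - ((V ∩ s).card : ℚ)) := by
  subst hBi
  obtain ⟨f, hfF, hfs⟩ := Finset.mem_image.mp hs
  classical
  set B' : Finset (Finset ℕ) := F.filter (fun g => g.image φ ⊆ V) with hB'def
  have hB'F : B' ⊆ F := Finset.filter_subset _ _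
  have hsubF : ∀ g ∈ F, g ⊆ verts F := fun g hg => subset_verts hg
  -- edges of copy inside V
  have hindCi : ind (F.image (fun f => f.image φ)) V = B'.image (fun f => f.image φ) := by
    rw [ind, Finset.filter_image]
  have hcard : (ind (F.image (fun f => f.image φ)) V).card = B'.card := by
    rw [hindCi]
    apply Finset.card_image_of_injOn
    intro g₁ h₁ g₂ h₂ hh
    exact img_inj hinj (hsubF _ (hB'F h₁)) (hsubF _ (hB'F h₂)) hh
  have hfk : f.card = k := hFk f hfF
  have hsk : s.card = k := by
    rw [← hfs, Finset.card_image_of_injOn (hinj.mono (by exact_mod_cast hsubF f hfF)), hfk]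
  have hfB' : (f ∈ B') ↔ s ⊆ V := by
    simp only [hB'def, Finset.mem_filter, hfs]
    exact ⟨fun h => h.2, fun h => ⟨hfF, h⟩⟩
  have hindBf : ind B' f = if f ∈ B' then {f} else ∅ := by
    ext g
    simp only [ind, Finset.mem_filter]
    split_ifs with hf
    · simp only [Finset.mem_singleton]
      constructor
      · rintro ⟨hg, hgf⟩
        exact Finset.eq_of_subset_of_card_le hgf (by rw [hfk, hFk g (hB'F hg)])
      · rintro rfl; exact ⟨hf, Finset.Subset.refl _⟩
    · simp only [Finset.notMem_empty, iff_false, not_and]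
      intro hg hgf
      have : g = f := Finset.eq_of_subset_of_card_le hgf (by rw [hfk, hFk g (hB'F hg)])
      exact hf (this ▸ hg)
  have hb : (B'.card : ℚ) - (if f ∈ B' then 1 else 0) ≤
      kdens k F * (((verts B' ∪ f).card : ℚ) - (k : ℚ)) := by
    by_cases hUf : verts B' ∪ f = f
    · have hBsub : B' ⊆ {f} := by
        intro g hg
        have hgf : g ⊆ f := (subset_verts hg).trans (hUf ▸ Finset.subset_union_left)
        rw [Finset.mem_singleton]
        exact Finset.eq_of_subset_of_card_le hgf (by rw [hfk, hFk g (hB'F hg)])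
      rw [hUf, hfk]
      rcases Finset.subset_singleton_iff.mp hBsub with h | h <;> rw [h] <;> simp
    · have hfU : f ⊂ verts B' ∪ f :=
        (Finset.subset_union_right).ssubset_of_ne (fun h => hUf h.symm)
      have hcard_gt : (k : ℚ) < ((verts B' ∪ f).card : ℚ) := by
        exact_mod_cast hfk ▸ Finset.card_lt_card hfU
      have htd := hbal f hfF B' hB'F
      simp only [tdens, _root_.dens] at htd
      rw [if_neg hUf] at htd
      have hindU : ind B' (verts B' ∪ f) = B' :=
        Finset.filter_true_of_mem fun g hg => (subset_verts hg).trans Finset.subset_union_left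
      rw [hindU, hindBf] at htd
      have hch : (((if f ∈ B' then ({f} : Finset (Finset ℕ)) else ∅).card : ℚ)) =
          (if f ∈ B' then (1 : ℚ) else 0) := by split_ifs <;> simp
      rw [hch, hfk] at htd
      have hpos : (0 : ℚ) < ((verts B' ∪ f).card : ℚ) - (k : ℚ) := by linarith
      calc (B'.card : ℚ) - (if f ∈ B' then 1 else 0)
          = (((B'.card : ℚ) - (if f ∈ B' then 1 else 0)) / (((verts B' ∪ f).card : ℚ) - k)) *
            (((verts B' ∪ f).card : ℚ) - k) := by field_simp
        _ ≤ kdens k F * (((verts B' ∪ f).card : ℚ) - k) :=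
            mul_le_mul_of_nonneg_right htd (le_of_lt hpos)
  have hcards : (verts B' ∪ f).card + (V ∩ s).card ≤
      (V ∩ verts (F.image (fun f => f.image φ))).card + k := by
    have hU_sub : verts B' ∪ f ⊆ verts F :=
      Finset.union_subset (verts_mono hB'F) (hsubF f hfF)
    have himg : ((verts B' ∪ f).image φ).card = (verts B' ∪ f).card :=
      Finset.card_image_of_injOn (hinj.mono (by exact_mod_cast hU_sub))
    have himgU : (verts B' ∪ f).image φ = (verts B').image φ ∪ s := by
      rw [Finset.image_union, hfs]
    set X := (verts B').image φ with hX
    have hXV : X ⊆ V := by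
      intro a ha
      obtain ⟨b, hb, rfl⟩ := Finset.mem_image.mp ha
      obtain ⟨g, hgB', hbg⟩ := mem_verts_iff.mp hb
      exact (Finset.mem_filter.mp hgB').2 (Finset.mem_image_of_mem φ hbg)
    have hXBi : X ⊆ verts (F.image (fun f => f.image φ)) := by
      rw [verts_image]
      exact Finset.image_subset_image (verts_mono hB'F)
    have hsBi : s ⊆ verts (F.image (fun f => f.image φ)) := subset_verts hs
    have hdisj : Disjoint (X ∪ (s ∩ V)) (s \ V) := by
      rw [Finset.disjoint_left]
      intro a ha has
      have haV : a ∈ V := by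
        rcases Finset.mem_union.mp ha with h | h
        · exact hXV h
        · exact (Finset.mem_inter.mp h).2
      exact (Finset.mem_sdiff.mp has).2 haV
    have hsplit : X ∪ s = (X ∪ (s ∩ V)) ∪ (s \ V) := by
      ext a
      simp only [Finset.mem_union, Finset.mem_inter, Finset.mem_sdiff]
      by_cases haV : a ∈ V <;> tauto
    have hsub2 : X ∪ (s ∩ V) ⊆ V ∩ verts (F.image (fun f => f.image φ)) := by
      apply Finset.union_subset
      · exact Finset.subset_inter hXV hXBi
      · exact Finset.subset_inter (Finset.inter_subset_right)
          ((Finset.inter_subset_left).trans hsBi)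
    calc (verts B' ∪ f).card + (V ∩ s).card
        = (X ∪ s).card + (s ∩ V).card := by rw [← himg, himgU, Finset.inter_comm]
      _ = (X ∪ (s ∩ V)).card + (s \ V).card + (s ∩ V).card := by
          rw [hsplit, Finset.card_union_of_disjoint hdisj]
      _ ≤ (V ∩ verts (F.image (fun f => f.image φ))).card + ((s \ V).card + (s ∩ V).card) := by
          have := Finset.card_le_card hsub2
          omega
      _ = (V ∩ verts (F.image (fun f => f.image φ))).card + k := by
          rw [Finset.card_sdiff_add_card_inter, hsk]
  -- combine
  rw [hcard]
  have hiff : (if s ⊆ V then (1:ℚ) else 0) = (if f ∈ B' then (1:ℚ) else 0) := by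
    simp [hfB']
  rw [hiff]
  refine hb.trans (mul_le_mul_of_nonneg_left ?_ hρ)
  have := hcards
  have hc : ((verts B' ∪ f).card : ℚ) + ((V ∩ s).card : ℚ) ≤
      ((V ∩ verts (F.image (fun f => f.image φ))).card : ℚ) + (k : ℚ) := by exact_mod_cast this
  linarith

/-- if `(F₁,…,F_ℓ, V, I)` is a chain of copies of a `k`-graph `F` on `m`
vertices, `|V| ≥ 1/ε³` and `ε` is small enough that `2m/(1/ε³ - k) ≤ ε²/(ρ_F + ε²)`, then
there exists `W` with `(V(F₁) ∪ V(F_ℓ)) ∩ V ⊆ W ⊊ V` and `ρ_{C,W} ≤ ρ_F + ε²`, where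
`C = (F₁+…+F_ℓ)[V]` is the chain hypergraph with vertex set `V`. -/
theorem too_large_is_not_reduced
    (k m : ℕ) (hk : 2 ≤ k)
    (F : Finset (Finset ℕ)) (hFk : ∀ e ∈ F, e.card = k) (hF2 : 2 ≤ F.card)
    (hm : (verts F).card = m)
    (hbal : ∀ f ∈ F, ∀ B' ⊆ F, tdens B' f ≤ kdens k F)
    (ε : ℚ) (hε : 0 < ε)
    (n : ℕ) (hn : 1 ≤ n) (B : ℕ → Finset (Finset ℕ)) (I0 : Finset ℕ) (hI0 : I0.card = k)
    (hpath : IsVSLoosePath n B I0) (hcopy : ∀ i < n, IsCopy F (B i))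
    (V : Finset ℕ) (hIV : I0 ⊆ V) (hVsub : V ⊆ verts (pUnion B (Finset.range n)))
    (C : Finset (Finset ℕ)) (hC : C = ind (pUnion B (Finset.range n)) V)
    (hVcard : 1 / ε ^ 3 ≤ (V.card : ℚ))
    (hkε : (k : ℚ) < 1 / ε ^ 3)
    (hsmall : 2 * (m : ℚ) / (1 / ε ^ 3 - (k : ℚ)) ≤ ε ^ 2 / (kdens k F + ε ^ 2)) :
    ∃ W : Finset ℕ,
      (verts (B 0) ∪ verts (B (n - 1))) ∩ V ⊆ W ∧ W ⊂ V ∧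
      ((C.card : ℚ) - ((ind C W).card : ℚ)) / ((V.card : ℚ) - (W.card : ℚ)) ≤
        kdens k F + ε ^ 2 := by
  classical
  obtain ⟨e, einj, he0, hblock, hsep⟩ := hpath
  set ρ := kdens k F with hρdef
  have hn0 : 0 < n := hn
  -- m > k
  have hmk : k < m := by
    obtain ⟨f₁, hf₁, f₂, hf₂, hne⟩ := Finset.one_lt_card.mp (lt_of_lt_of_le one_lt_two hF2)
    have h12 : ¬ f₂ ⊆ f₁ := fun h => hne
      (Finset.eq_of_subset_of_card_le h (by rw [hFk f₁ hf₁, hFk f₂ hf₂])).symm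
    obtain ⟨x, hx2, hx1⟩ := Finset.not_subset.mp h12
    have hsub : insert x f₁ ⊆ verts F :=
      Finset.insert_subset (subset_verts hf₂ hx2) (subset_verts hf₁)
    have hc := Finset.card_le_card hsub
    rw [Finset.card_insert_of_notMem hx1, hFk f₁ hf₁, hm] at hc
    omega
  have hρpos : 0 < ρ := by
    rw [hρdef, kdens, hm]
    have h1 : (1:ℚ) < F.card := by exact_mod_cast lt_of_lt_of_le one_lt_two hF2
    have h2 : (k:ℚ) < m := by exact_mod_cast hmk
    exact div_pos (by linarith) (by linarith)
  have hρ0 : 0 ≤ ρ := le_of_lt hρpos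
  -- qfun facts
  have hq1 : ∀ i, 1 ≤ qfun B i := fun i => Nat.le_add_right 1 _
  have hqmono : ∀ i j, i ≤ j → qfun B i ≤ qfun B j := fun i j h =>
    Nat.add_le_add_left (Finset.sum_le_sum_of_subset (Finset.range_subset_range.mpr h)) 1
  have hqlt : ∀ i, i ≤ n → qfun B i - 1 < qfun B n := fun i h =>
    lt_of_lt_of_le (Nat.sub_lt (hq1 i) one_pos) (hqmono i n h)
  have hsB : ∀ i < n, e (qfun B i - 1) ∈ B i := by
    intro i hi
    rw [hblock i hi]
    apply Finset.mem_image_of_mem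
    rw [Finset.mem_filter, Finset.mem_range]
    exact ⟨hqlt i (le_of_lt hi), le_refl _,
      Nat.sub_le_sub_right (hqmono i (i+1) (Nat.le_succ i)) 1⟩
  have hsB' : ∀ i, 0 < i → i < n → e (qfun B i - 1) ∈ B (i - 1) := by
    intro i h0 hi
    rw [hblock (i-1) (lt_of_le_of_lt (Nat.sub_le i 1) hi)]
    apply Finset.mem_image_of_mem
    rw [Finset.mem_filter, Finset.mem_range]
    refine ⟨hqlt i (le_of_lt hi),
      Nat.sub_le_sub_right (hqmono (i-1) i (Nat.sub_le i 1)) 1, ?_⟩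
    rw [Nat.sub_add_cancel h0]
  have hs0 : e (qfun B 0 - 1) = I0 := by simpa [qfun] using he0
  have hI0B0 : I0 ∈ B 0 := by rw [← hs0]; exact hsB 0 hn0
  -- per copy bound
  have hcore : ∀ i < n, ((ind (B i) V).card : ℚ) - (if e (qfun B i - 1) ⊆ V then 1 else 0) ≤
      ρ * (((V ∩ verts (B i)).card : ℚ) - ((V ∩ e (qfun B i - 1)).card : ℚ)) := by
    intro i hi
    obtain ⟨φ, hinj, hBi⟩ := hcopy i hi
    exact copy_bound k F hFk hbal hρ0 φ hinj (B i) hBi V _ (hsB i hi)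
  -- edge counting
  have hedge : ∀ j, j ≤ n → (ind (pUnion B (Finset.range j)) V).card +
      (∑ i ∈ Finset.range j, if 0 < i ∧ e (qfun B i - 1) ⊆ V then 1 else 0) ≤
      ∑ i ∈ Finset.range j, (ind (B i) V).card := by
    intro j
    induction j with
    | zero => intro _; simp [pUnion, ind]
    | succ j ih =>
      intro hj
      have hjn : j < n := by omega
      have hih := ih (by omega)
      have hun : pUnion B (Finset.range (j+1)) = B j ∪ pUnion B (Finset.range j) := by
        rw [pUnion, Finset.range_add_one, Finset.biUnion_insert]; rfl
      have hindun : ind (pUnion B (Finset.range (j+1))) V =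
          ind (pUnion B (Finset.range j)) V ∪ ind (B j) V := by
        rw [hun, ind, ind, ind, Finset.filter_union, Finset.union_comm]
      rw [Finset.sum_range_succ, Finset.sum_range_succ, hindun]
      have hkey := Finset.card_union_add_card_inter
        (ind (pUnion B (Finset.range j)) V) (ind (B j) V)
      by_cases hc : 0 < j ∧ e (qfun B j - 1) ⊆ V
      · have hmem : e (qfun B j - 1) ∈ ind (pUnion B (Finset.range j)) V ∩ ind (B j) V := by
          rw [Finset.mem_inter]
          constructor
          · rw [ind, Finset.mem_filter]
            refine ⟨?_, hc.2⟩
            rw [pUnion, Finset.mem_biUnion]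
            exact ⟨j - 1, Finset.mem_range.mpr (by omega), hsB' j hc.1 hjn⟩
          · rw [ind, Finset.mem_filter]; exact ⟨hsB j hjn, hc.2⟩
        have h1 : 1 ≤ (ind (pUnion B (Finset.range j)) V ∩ ind (B j) V).card :=
          Finset.card_pos.mpr ⟨_, hmem⟩
        rw [if_pos hc]
        omega
      · rw [if_neg hc]
        have hle := Finset.card_union_le (ind (pUnion B (Finset.range j)) V) (ind (B j) V)
        omega
  -- vertex counting
  have hvert : ∀ j, j ≤ n → ∑ i ∈ Finset.range j, (V ∩ verts (B i)).card ≤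
      (V ∩ verts (pUnion B (Finset.range j))).card +
      ∑ i ∈ Finset.range j, (if 0 < i then (V ∩ e (qfun B i - 1)).card else 0) := by
    intro j
    induction j with
    | zero => intro _; simp
    | succ j ih =>
      intro hj
      have hjn : j < n := by omega
      have hih := ih (by omega)
      have hun : verts (pUnion B (Finset.range (j+1))) =
          verts (pUnion B (Finset.range j)) ∪ verts (B j) := by
        rw [pUnion, Finset.range_add_one, Finset.biUnion_insert]
        show verts (B j ∪ pUnion B (Finset.range j)) = _
        rw [verts_union, Finset.union_comm]
      have hinter : V ∩ verts (pUnion B (Finset.range (j+1))) =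
          (V ∩ verts (pUnion B (Finset.range j))) ∪ (V ∩ verts (B j)) := by
        rw [hun, Finset.inter_union_distrib_left]
      rw [Finset.sum_range_succ, Finset.sum_range_succ, hinter]
      have hkey := Finset.card_union_add_card_inter
        (V ∩ verts (pUnion B (Finset.range j))) (V ∩ verts (B j))
      by_cases h0 : 0 < j
      · have hintersub : (V ∩ verts (pUnion B (Finset.range j))) ∩ (V ∩ verts (B j)) ⊆
            V ∩ e (qfun B j - 1) := by
          intro a ha
          simp only [Finset.mem_inter] at ha ⊢
          refine ⟨ha.1.1, ?_⟩
          have hBjsub : verts (B j) ⊆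
              verts (pUnion B ((Finset.range n).filter (fun i => j ≤ i))) := by
            apply verts_mono
            intro g hg
            rw [pUnion, Finset.mem_biUnion]
            exact ⟨j, Finset.mem_filter.mpr ⟨Finset.mem_range.mpr hjn, le_refl j⟩, hg⟩
          have hsepj := hsep j h0 hjn
          have hmem : a ∈ verts (pUnion B (Finset.range j)) ∩
              verts (pUnion B ((Finset.range n).filter (fun i => j ≤ i))) :=
            Finset.mem_inter.mpr ⟨ha.1.2, hBjsub ha.2.2⟩
          rw [hsepj] at hmem
          exact hmem
        have h2 := Finset.card_le_card hintersub
        rw [if_pos h0]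
        omega
      · have hj0 : j = 0 := by omega
        rw [if_neg h0]
        subst hj0
        simp only [Finset.range_zero, Finset.sum_empty, zero_add, add_zero]
        exact Finset.card_le_card Finset.subset_union_right
  -- global edge bound in ℚ
  have hCcard : (C.card : ℚ) ≤ 1 + ρ * ((V.card : ℚ) - (k : ℚ)) := by
    have hE := hedge n (le_refl n)
    have hsplitE : (∑ i ∈ Finset.range n, if e (qfun B i - 1) ⊆ V then 1 else 0) ≤
        1 + ∑ i ∈ Finset.range n, (if 0 < i ∧ e (qfun B i - 1) ⊆ V then 1 else 0) := by
      have hle : ∀ i ∈ Finset.range n, (if e (qfun B i - 1) ⊆ V then 1 else 0) ≤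
          (if i = 0 then 1 else 0) + (if 0 < i ∧ e (qfun B i - 1) ⊆ V then 1 else 0) := by
        intro i _
        rcases Nat.eq_zero_or_pos i with h | h
        · subst h
          have hle1 : (if e (qfun B 0 - 1) ⊆ V then 1 else 0) ≤ 1 := by split <;> omega
          simpa using hle1
        · simp [Nat.pos_iff_ne_zero.mp h, h]
      calc (∑ i ∈ Finset.range n, if e (qfun B i - 1) ⊆ V then 1 else 0)
          ≤ ∑ i ∈ Finset.range n, ((if i = 0 then 1 else 0) +
            (if 0 < i ∧ e (qfun B i - 1) ⊆ V then 1 else 0)) := Finset.sum_le_sum hle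
        _ = (∑ i ∈ Finset.range n, if i = 0 then 1 else 0) +
            ∑ i ∈ Finset.range n, (if 0 < i ∧ e (qfun B i - 1) ⊆ V then 1 else 0) :=
            Finset.sum_add_distrib
        _ = 1 + ∑ i ∈ Finset.range n, (if 0 < i ∧ e (qfun B i - 1) ⊆ V then 1 else 0) := by
            rw [Finset.sum_ite_eq' (Finset.range n) 0 (fun _ => 1),
              if_pos (Finset.mem_range.mpr hn0)]
    have hEnat : C.card + (∑ i ∈ Finset.range n, if e (qfun B i - 1) ⊆ V then 1 else 0) ≤
        1 + ∑ i ∈ Finset.range n, (ind (B i) V).card := by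
      rw [hC]
      omega
    -- vertex side
    have hVt := hvert n (le_refl n)
    rw [Finset.inter_eq_left.mpr hVsub] at hVt
    have hsplitV : ∑ i ∈ Finset.range n, (V ∩ e (qfun B i - 1)).card =
        k + ∑ i ∈ Finset.range n, (if 0 < i then (V ∩ e (qfun B i - 1)).card else 0) := by
      have heach : ∀ i ∈ Finset.range n, (V ∩ e (qfun B i - 1)).card =
          (if i = 0 then k else 0) + (if 0 < i then (V ∩ e (qfun B i - 1)).card else 0) := by
        intro i _
        rcases Nat.eq_zero_or_pos i with h | h
        · subst h
          rw [hs0, Finset.inter_eq_right.mpr hIV, hI0]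
          simp
        · have : i ≠ 0 := Nat.pos_iff_ne_zero.mp h
          simp [this, h]
      rw [Finset.sum_congr rfl heach, Finset.sum_add_distrib,
        Finset.sum_ite_eq' (Finset.range n) 0 (fun _ => k),
        if_pos (Finset.mem_range.mpr hn0)]
    -- cast to ℚ and combine
    have hsum1 : ∑ i ∈ Finset.range n, (((ind (B i) V).card : ℚ) -
        (if e (qfun B i - 1) ⊆ V then 1 else 0)) ≤
        ρ * ∑ i ∈ Finset.range n, (((V ∩ verts (B i)).card : ℚ) -
          ((V ∩ e (qfun B i - 1)).card : ℚ)) := by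
      rw [Finset.mul_sum]
      exact Finset.sum_le_sum (fun i hi => hcore i (Finset.mem_range.mp hi))
    rw [Finset.sum_sub_distrib, Finset.sum_sub_distrib] at hsum1
    have hEQ : (C.card : ℚ) + (∑ i ∈ Finset.range n,
        if e (qfun B i - 1) ⊆ V then (1:ℚ) else 0) ≤
        1 + ∑ i ∈ Finset.range n, ((ind (B i) V).card : ℚ) := by
      exact_mod_cast hEnat
    have hVQ1 : (∑ i ∈ Finset.range n, ((V ∩ verts (B i)).card : ℚ)) ≤ (V.card : ℚ) +
        ∑ i ∈ Finset.range n, (if 0 < i then ((V ∩ e (qfun B i - 1)).card : ℚ) else 0) := by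
      exact_mod_cast hVt
    have hVQ2 : (∑ i ∈ Finset.range n, ((V ∩ e (qfun B i - 1)).card : ℚ)) = (k : ℚ) +
        ∑ i ∈ Finset.range n, (if 0 < i then ((V ∩ e (qfun B i - 1)).card : ℚ) else 0) := by
      exact_mod_cast hsplitV
    have hVQ : (∑ i ∈ Finset.range n, ((V ∩ verts (B i)).card : ℚ)) -
        (∑ i ∈ Finset.range n, ((V ∩ e (qfun B i - 1)).card : ℚ)) ≤ (V.card : ℚ) - k := by
      linarith
    have hmul := mul_le_mul_of_nonneg_left hVQ hρ0
    linarith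
  -- final W
  have hvertsle : ∀ i < n, (verts (B i)).card ≤ m := by
    intro i hi
    obtain ⟨φ, hinj, hBi⟩ := hcopy i hi
    rw [hBi, verts_image]
    exact (Finset.card_image_le).trans (le_of_eq hm)
  set W := (verts (B 0) ∪ verts (B (n-1))) ∩ V with hW
  have hWV : W ⊆ V := Finset.inter_subset_right
  have hWle : W.card ≤ 2 * m := by
    have h1 : W.card ≤ (verts (B 0) ∪ verts (B (n-1))).card :=
      Finset.card_le_card Finset.inter_subset_left
    have h2 := Finset.card_union_le (verts (B 0)) (verts (B (n-1)))
    have h3 := hvertsle 0 hn0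
    have h4 := hvertsle (n-1) (by omega)
    omega
  have hεpos2 : (0:ℚ) < ε^2 := by positivity
  have hεpos3 : (0:ℚ) < 1/ε^3 - (k:ℚ) := by linarith
  have h2m : 2*(m:ℚ)*(ρ + ε^2) ≤ ε^2*(1/ε^3 - (k:ℚ)) := by
    rw [div_le_div_iff₀ hεpos3 (by linarith)] at hsmall
    linarith
  have hWcast : (W.card : ℚ) ≤ 2*(m:ℚ) := by exact_mod_cast hWle
  have h2m' : 2*(m:ℚ) ≤ 1/ε^3 - (k:ℚ) := by nlinarith
  have hWVQ : ((W.card : ℚ)) < (V.card : ℚ) := by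
    have hk0 : (0:ℚ) < (k:ℚ) := by exact_mod_cast lt_of_lt_of_le two_pos hk
    linarith
  refine ⟨W, Finset.Subset.refl _, ?_, ?_⟩
  · refine Finset.ssubset_iff_subset_ne.mpr ⟨hWV, fun h => ?_⟩
    rw [h] at hWVQ
    exact lt_irrefl _ hWVQ
  · have hI0C : I0 ∈ C := by
      rw [hC, ind, Finset.mem_filter]
      refine ⟨?_, hIV⟩
      rw [pUnion, Finset.mem_biUnion]
      exact ⟨0, Finset.mem_range.mpr hn0, hI0B0⟩
    have hI0W : I0 ⊆ W :=
      Finset.subset_inter ((subset_verts hI0B0).trans Finset.subset_union_left) hIV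
    have hindW : (1:ℚ) ≤ ((ind C W).card : ℚ) := by
      have hpos : 0 < (ind C W).card :=
        Finset.card_pos.mpr ⟨I0, Finset.mem_filter.mpr ⟨hI0C, hI0W⟩⟩
      exact_mod_cast hpos
    have hD : (0:ℚ) < (V.card:ℚ) - (W.card : ℚ) := by linarith
    rw [div_le_iff₀ hD]
    have p1 : (0:ℚ) ≤ (ρ+ε^2) * (2*(m:ℚ) - (W.card:ℚ)) :=
      mul_nonneg (by linarith) (by linarith)
    have p2 : (0:ℚ) ≤ ε^2 * ((V.card:ℚ) - 1/ε^3) :=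
      mul_nonneg (le_of_lt hεpos2) (by linarith)
    have p3 : (0:ℚ) ≤ ρ * (k:ℚ) := mul_nonneg hρ0 (by positivity)
    have p4 : (0:ℚ) ≤ ε^2 * (k:ℚ) := mul_nonneg (le_of_lt hεpos2) (by positivity)
    nlinarith [hCcard, hindW, h2m, p1, p2, p3, p4]
end

section
/- Let H be a k-uniform hypergraph on n vertices that is (s, n^{ε³})-bounded in the strong sense that every strictly balanced template (A', I') with v(A') ≤ 1/ε and injection ψ' satisfies Φ_{A',ψ'} ≤ n^{ε³}·max{1, n^{(1 − ρ_{A',I'}/ρ_F)(v(A')−|I'|)}}. Let (A, I) be a k-template with v(A) ≤ 1/ε and ρ_{A,J} ≥ ρ_F for all I ⊆ J ⊊ V(A), and let ψ : I ↪ V(H). Then the number of embeddings Φ_{A,ψ} of (A,I) into H extending ψ is at most n^{ε³·(v(A)−|I|)}, hence at most n^{ε²}. -/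
open Finset

/-- The (real-valued) density of the template `(A[U], I)`, where `A[U]` carries the vertex
set `U`. -/
noncomputable def densR (A : Finset (Finset ℕ)) (U I : Finset ℕ) : ℝ :=
  if U = I then 0
  else (((ind A U).card : ℝ) - ((ind A I).card : ℝ)) / ((U.card : ℝ) - (I.card : ℝ))

/-- The density `ρ_{A,I}` of the template `(A, I)`. -/
noncomputable def tdensR (A : Finset (Finset ℕ)) (I : Finset ℕ) : ℝ :=
  densR A (verts A ∪ I) I

/-- The template `(A, I)` is strictly balanced. -/
def StrictBalTR (A : Finset (Finset ℕ)) (I : Finset ℕ) : Prop :=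
  ∀ U : Finset ℕ, I ⊆ U → U ⊂ verts A ∪ I → U ≠ I → densR A U I < tdensR A I

/-- The number of embeddings of the template `(A, I)` into the hypergraph `H` with vertex set
`VH` extending `ψ`. -/
noncomputable def embCount (VH : Finset ℕ) (H A : Finset (Finset ℕ)) (I : Finset ℕ)
    (ψ : ℕ → ℕ) : ℕ :=
  Nat.card {φ : ℕ → ℕ //
    Set.InjOn φ ↑(verts A ∪ I) ∧
    (∀ v ∈ verts A ∪ I, φ v ∈ VH) ∧
    (∀ v ∈ I, φ v = ψ v) ∧
    (∀ e ∈ A, ¬ e ⊆ I → e.image φ ∈ H) ∧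
    (∀ v ∉ verts A ∪ I, φ v = 0)}



lemma edge_subset_verts {A : Finset (Finset ℕ)} {e : Finset ℕ} (he : e ∈ A) : e ⊆ verts A :=
  Finset.le_sup (f := id) he

lemma verts_ind_subset (A : Finset (Finset ℕ)) (W : Finset ℕ) : verts (ind A W) ⊆ W := by
  intro x hx
  rw [verts, Finset.mem_sup] at hx
  obtain ⟨e, he, hx⟩ := hx
  exact (Finset.mem_filter.1 he).2 hx

lemma ind_ind {A : Finset (Finset ℕ)} {U W : Finset ℕ} (h : U ⊆ W) :
    ind (ind A W) U = ind A U := by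
  ext e
  simp only [ind, mem_filter]
  exact ⟨fun hh => ⟨hh.1.1, hh.2⟩, fun hh => ⟨⟨hh.1, hh.2.trans h⟩, hh.2⟩⟩

lemma densR_ind {A : Finset (Finset ℕ)} {U B W : Finset ℕ} (hU : U ⊆ W) (hB : B ⊆ W) :
    densR (ind A W) U B = densR A U B := by
  unfold densR
  rw [ind_ind hU, ind_ind hB]

open scoped Classical in
noncomputable def embOmega (VH V : Finset ℕ) : Finset (ℕ → ℕ) :=
  (V.pi (fun _ => insert 0 VH)).image (fun g v => if h : v ∈ V then g v h else 0)

lemma mem_embOmega {VH V : Finset ℕ} {φ : ℕ → ℕ} :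
    φ ∈ embOmega VH V ↔ (∀ v ∈ V, φ v ∈ insert 0 VH) ∧ (∀ v ∉ V, φ v = 0) := by
  classical
  constructor
  · intro h
    simp only [embOmega, mem_image] at h
    obtain ⟨g, hg, rfl⟩ := h
    refine ⟨fun v hv => ?_, fun v hv => ?_⟩
    · simp only [dif_pos hv]; exact Finset.mem_pi.1 hg v hv
    · simp [dif_neg hv]
  · rintro ⟨h1, h2⟩
    simp only [embOmega, mem_image]
    refine ⟨fun v _ => φ v, Finset.mem_pi.2 fun v hv => h1 v hv, ?_⟩
    funext v
    by_cases hv : v ∈ V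
    · simp [hv]
    · simp [hv, h2 v hv]

def embCond (VH : Finset ℕ) (H A : Finset (Finset ℕ)) (I : Finset ℕ) (ψ φ : ℕ → ℕ) : Prop :=
  Set.InjOn φ ↑(verts A ∪ I) ∧ (∀ v ∈ verts A ∪ I, φ v ∈ VH) ∧ (∀ v ∈ I, φ v = ψ v) ∧
    (∀ e ∈ A, ¬ e ⊆ I → e.image φ ∈ H) ∧ (∀ v ∉ verts A ∪ I, φ v = 0)

open scoped Classical in
lemma embCount_eq {VH V : Finset ℕ} {H A : Finset (Finset ℕ)} {I : Finset ℕ} {ψ : ℕ → ℕ}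
    (hsub : verts A ∪ I ⊆ V) :
    embCount VH H A I ψ = ((embOmega VH V).filter (embCond VH H A I ψ)).card := by
  classical
  have h1 : embCount VH H A I ψ = Nat.card {φ : ℕ → ℕ | embCond VH H A I ψ φ} := rfl
  rw [h1, Nat.card_coe_set_eq]
  have h2 : {φ : ℕ → ℕ | embCond VH H A I ψ φ}
      = ↑((embOmega VH V).filter (embCond VH H A I ψ)) := by
    ext φ
    simp only [Set.mem_setOf_eq, coe_filter, Set.mem_setOf_eq]
    constructor
    · intro h
      refine ⟨mem_embOmega.2 ⟨fun v hv => ?_, fun v hv => ?_⟩, h⟩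
      · by_cases hv' : v ∈ verts A ∪ I
        · exact mem_insert_of_mem (h.2.1 v hv')
        · rw [h.2.2.2.2 v hv']; exact mem_insert_self _ _
      · exact h.2.2.2.2 v fun hx => hv (hsub hx)
    · exact fun h => h.2
  rw [h2, Set.ncard_coe_finset]

open scoped Classical in
lemma split_bot {VH V B W : Finset ℕ} {H A : Finset (Finset ℕ)} {ψ φ : ℕ → ℕ}
    (hBW : B ⊆ W) (hsupp : verts A ∪ B = V) (hWV : W ⊆ V)
    (hW : verts (ind A W) ∪ B = W)
    (hφ : φ ∈ (embOmega VH V).filter (embCond VH H A B ψ)) :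
    (fun v => if v ∈ W then φ v else 0) ∈
      (embOmega VH V).filter (embCond VH H (ind A W) B ψ) := by
  classical
  rw [Finset.mem_filter] at hφ ⊢
  obtain ⟨hΩ, hinj, hval, hψv, hedge, hzero⟩ := hφ
  rw [mem_embOmega] at hΩ
  have hagree : ∀ v ∈ W, (if v ∈ W then φ v else 0) = φ v := fun v hv => if_pos hv
  constructor
  · rw [mem_embOmega]
    refine ⟨fun v hv => ?_, fun v hv => ?_⟩
    · by_cases h : v ∈ W
      · rw [if_pos h]; exact hΩ.1 v hv
      · rw [if_neg h]; exact Finset.mem_insert_self _ _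
    · rw [if_neg fun h => hv (hWV h)]
  · have hWAB : W ⊆ verts A ∪ B := by rw [hsupp]; exact hWV
    unfold embCond
    rw [hW]
    refine ⟨?_, ?_, ?_, ?_, ?_⟩
    · intro x hx y hy hxy
      rw [Finset.mem_coe] at hx hy
      have hxy' : φ x = φ y := by
        have := hxy
        simp only [if_pos hx, if_pos hy] at this
        exact this
      exact hinj (Finset.mem_coe.2 (hWAB hx)) (Finset.mem_coe.2 (hWAB hy)) hxy'
    · intro v hv
      show (if v ∈ W then φ v else 0) ∈ VH
      rw [hagree v hv]
      exact hval v (hWAB hv)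
    · intro v hv
      show (if v ∈ W then φ v else 0) = ψ v
      rw [hagree v (hBW hv)]
      exact hψv v hv
    · intro e he hne
      have heW : e ⊆ W := (Finset.mem_filter.1 he).2
      have : Finset.image (fun v => if v ∈ W then φ v else 0) e = Finset.image φ e :=
        Finset.image_congr fun v hv => hagree v (heW hv)
      rw [this]
      exact hedge e (Finset.mem_filter.1 he).1 hne
    · intro v hv
      show (if v ∈ W then φ v else 0) = 0
      exact if_neg hv

open scoped Classical in
lemma split_top {VH V B W : Finset ℕ} {H A : Finset (Finset ℕ)} {ψ φ : ℕ → ℕ}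
    (hBW : B ⊆ W) (hsuppB : verts A ∪ B = V) (hsuppW : verts A ∪ W = V)
    (hφ : φ ∈ (embOmega VH V).filter (embCond VH H A B ψ)) :
    φ ∈ (embOmega VH V).filter (embCond VH H A W (fun v => if v ∈ W then φ v else 0)) := by
  classical
  rw [Finset.mem_filter] at hφ ⊢
  obtain ⟨hΩ, hinj, hval, hψv, hedge, hzero⟩ := hφ
  refine ⟨hΩ, ?_, ?_, ?_, ?_, ?_⟩
  · rw [hsuppW, ← hsuppB]; exact hinj
  · rw [hsuppW, ← hsuppB]; exact hval
  · intro v hv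
    exact (if_pos hv).symm
  · intro e he hne
    exact hedge e he fun h => hne (h.trans hBW)
  · rw [hsuppW, ← hsuppB]; exact hzero

lemma supp_eq {A : Finset (Finset ℕ)} {I B : Finset ℕ} (hIB : I ⊆ B)
    (hBV : B ⊆ verts A ∪ I) : verts A ∪ B = verts A ∪ I := by
  apply Finset.Subset.antisymm
  · exact Finset.union_subset Finset.subset_union_left hBV
  · exact Finset.union_subset Finset.subset_union_left (hIB.trans Finset.subset_union_right)

/-- if every strictly balanced template `(A', I')` with `v(A') ≤ 1/ε` satisfies
the strong boundedness bound `Φ_{A',ψ'} ≤ n^(ε³) ⬝ max 1 (n^((1 - ρ_{A',I'}/ρ_F)(v(A')-|I'|)))`,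
and `(A, I)` is a `k`-template with `v(A) ≤ 1/ε` and `ρ_{A,J} ≥ ρ_F` for all `I ⊆ J ⊊ V(A)`,
then `Φ_{A,ψ} ≤ n^(ε³ (v(A)-|I|)) ≤ n^(ε²)`. -/
theorem dense_template_chain
    (k n : ℕ) (hk : 2 ≤ k) (hn : 1 ≤ n)
    (ε ρF : ℝ) (hε : 0 < ε) (hρF : 0 < ρF)
    (VH : Finset ℕ) (hVH : VH.card = n)
    (H : Finset (Finset ℕ)) (hHV : ∀ e ∈ H, e ⊆ VH) (hHk : ∀ e ∈ H, e.card = k)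
    (hbdd : ∀ A' : Finset (Finset ℕ), ∀ I' : Finset ℕ, ∀ ψ' : ℕ → ℕ,
      (∀ e ∈ A', e.card = k) → ((verts A' ∪ I').card : ℝ) ≤ 1 / ε → StrictBalTR A' I' →
      Set.InjOn ψ' ↑I' → (∀ v ∈ I', ψ' v ∈ VH) →
      (embCount VH H A' I' ψ' : ℝ) ≤
        (n : ℝ) ^ (ε ^ 3) *
          max 1 ((n : ℝ) ^
            ((1 - tdensR A' I' / ρF) * (((verts A' ∪ I').card : ℝ) - (I'.card : ℝ)))))
    (A : Finset (Finset ℕ)) (I : Finset ℕ) (ψ : ℕ → ℕ)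
    (hAk : ∀ e ∈ A, e.card = k) (hAsize : ((verts A ∪ I).card : ℝ) ≤ 1 / ε)
    (hdense : ∀ J : Finset ℕ, I ⊆ J → J ⊂ verts A ∪ I → ρF ≤ densR A (verts A ∪ I) J)
    (hψ : Set.InjOn ψ ↑I) (hψV : ∀ v ∈ I, ψ v ∈ VH) :
    (embCount VH H A I ψ : ℝ) ≤
      (n : ℝ) ^ (ε ^ 3 * (((verts A ∪ I).card : ℝ) - (I.card : ℝ))) ∧
    (embCount VH H A I ψ : ℝ) ≤ (n : ℝ) ^ (ε ^ 2) := by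
  classical
  have hn1 : (1:ℝ) ≤ (n:ℝ) := by exact_mod_cast hn
  have hn0 : (0:ℝ) < (n:ℝ) := lt_of_lt_of_le one_pos hn1
  set V := verts A ∪ I with hVdef
  have hVA : verts A ⊆ V := Finset.subset_union_left
  have hIV : I ⊆ V := Finset.subset_union_right
  -- base case helper
  have base : ∀ ψ' : ℕ → ℕ, (embCount VH H A V ψ' : ℝ) ≤ 1 := by
    intro ψ'
    have hs : verts A ∪ V ⊆ V := Finset.union_subset hVA Finset.Subset.rfl
    have hs' : verts A ∪ V = V := Finset.Subset.antisymm hs Finset.subset_union_right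
    rw [embCount_eq (V := V) hs]
    have hcard : ((embOmega VH V).filter (embCond VH H A V ψ')).card ≤ 1 := by
      refine Finset.card_le_one.2 fun φ1 h1 φ2 h2 => ?_
      rw [Finset.mem_filter] at h1 h2
      funext v
      by_cases hv : v ∈ V
      · rw [h1.2.2.2.1 v hv, h2.2.2.2.1 v hv]
      · rw [h1.2.2.2.2.2 v (by rw [hs']; exact hv), h2.2.2.2.2.2 v (by rw [hs']; exact hv)]
    exact_mod_cast hcard
  -- main induction
  have main : ∀ d : ℕ, ∀ B : Finset ℕ, I ⊆ B → B ⊆ V → V.card - B.card ≤ d →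
      ∀ ψ' : ℕ → ℕ, Set.InjOn ψ' ↑B → (∀ v ∈ B, ψ' v ∈ VH) →
      (embCount VH H A B ψ' : ℝ) ≤ (n : ℝ) ^ (ε ^ 3 * ((V.card : ℝ) - (B.card : ℝ))) := by
    intro d
    induction d with
    | zero =>
      intro B hIB hBV hd ψ' hinj hval
      have hBeq : B = V := Finset.eq_of_subset_of_card_le hBV (by omega)
      subst hBeq
      have h0 : ε ^ 3 * ((V.card : ℝ) - (V.card : ℝ)) = 0 := by ring
      rw [h0, Real.rpow_zero]
      exact base ψ'
    | succ d ih =>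
      intro B hIB hBV hd ψ' hinj hval
      by_cases hBeq : B = V
      · subst hBeq
        have h0 : ε ^ 3 * ((V.card : ℝ) - (V.card : ℝ)) = 0 := by ring
        rw [h0, Real.rpow_zero]
        exact base ψ'
      have hBVs : B ⊂ V := HasSubset.Subset.ssubset_of_ne hBV hBeq
      have hsupB : verts A ∪ B = V := supp_eq hIB hBV
      -- candidates
      set cand := V.powerset.filter (fun U => B ⊂ U) with hcand
      have hVc : V ∈ cand := Finset.mem_filter.2 ⟨Finset.mem_powerset.2 Finset.Subset.rfl, hBVs⟩
      have hne : cand.Nonempty := ⟨V, hVc⟩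
      set D := cand.sup' hne (fun U => densR A U B) with hD
      have hDV : densR A V B ≤ D := Finset.le_sup' (fun U => densR A U B) hVc
      have hρD : ρF ≤ D := le_trans (hdense B hIB hBVs) hDV
      obtain ⟨W0, hW0c, hW0D⟩ := Finset.exists_mem_eq_sup' hne (fun U => densR A U B)
      set cand2 := cand.filter (fun U => densR A U B = D) with hcand2
      have hne2 : cand2.Nonempty := ⟨W0, Finset.mem_filter.2 ⟨hW0c, hW0D.symm⟩⟩
      obtain ⟨W, hWc2, hWmin⟩ := Finset.exists_min_image cand2 (fun U => U.card) hne2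
      have hWc : W ∈ cand := (Finset.mem_filter.1 hWc2).1
      have hWD : densR A W B = D := (Finset.mem_filter.1 hWc2).2
      have hBW : B ⊂ W := (Finset.mem_filter.1 hWc).2
      have hWV : W ⊆ V := Finset.mem_powerset.1 (Finset.mem_filter.1 hWc).1
      have hWneB : W ≠ B := hBW.ne'
      have hcardBW : B.card < W.card := Finset.card_lt_card hBW
      have hxpos : (0:ℝ) < (W.card : ℝ) - (B.card : ℝ) := by
        rw [sub_pos]; exact_mod_cast hcardBW
      have hdensW : densR A W B
          = (((ind A W).card : ℝ) - ((ind A B).card : ℝ)) / ((W.card : ℝ) - (B.card : ℝ)) := by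
        rw [densR, if_neg hWneB]
      -- numerator positive
      have hnum : (0:ℝ) < ((ind A W).card : ℝ) - ((ind A B).card : ℝ) := by
        by_contra h
        push_neg at h
        have : densR A W B ≤ 0 := by
          rw [hdensW]
          exact div_nonpos_of_nonpos_of_nonneg h hxpos.le
        rw [hWD] at this
        linarith
      -- W' = W
      set W' := verts (ind A W) ∪ B with hW'def
      have hW'W : W' ⊆ W := Finset.union_subset (verts_ind_subset A W) hBW.subset
      have hindW' : ind A W' = ind A W := by
        apply Finset.Subset.antisymm
        · intro e he
          rw [ind, Finset.mem_filter] at he ⊢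
          exact ⟨he.1, he.2.trans hW'W⟩
        · intro e he
          rw [ind, Finset.mem_filter] at he ⊢
          refine ⟨he.1, ?_⟩
          refine Finset.Subset.trans ?_ Finset.subset_union_left
          exact edge_subset_verts (Finset.mem_filter.2 he)
      have hBW' : B ⊂ W' := by
        refine HasSubset.Subset.ssubset_of_ne Finset.subset_union_right fun h => ?_
        have heq : ind A B = ind A W := by rw [h, hindW']
        rw [heq] at hnum
        simp at hnum
      have hW'c : W' ∈ cand :=
        Finset.mem_filter.2 ⟨Finset.mem_powerset.2 (hW'W.trans hWV), hBW'⟩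
      have hW'eq : W' = W := by
        refine Finset.eq_of_subset_of_card_le hW'W ?_
        by_contra h
        push_neg at h
        have hx'pos : (0:ℝ) < (W'.card : ℝ) - (B.card : ℝ) := by
          rw [sub_pos]; exact_mod_cast Finset.card_lt_card hBW'
        have hlt : (W'.card : ℝ) - (B.card : ℝ) < (W.card : ℝ) - (B.card : ℝ) := by
          have : (W'.card : ℝ) < (W.card : ℝ) := by exact_mod_cast h
          linarith
        have hgt : D < densR A W' B := by
          rw [densR, if_neg hBW'.ne', hindW', ← hWD, hdensW]
          exact div_lt_div_of_pos_left hnum hx'pos hlt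
        have : densR A W' B ≤ D := Finset.le_sup' (fun U => densR A U B) hW'c
        linarith
      -- strict balance of (A[W], B)
      have htd : tdensR (ind A W) B = D := by
        rw [tdensR, ← hW'def, hW'eq, densR_ind Finset.Subset.rfl hBW.subset, hWD]
      have hsb : StrictBalTR (ind A W) B := by
        intro U hBU hUss hUB
        rw [← hW'def, hW'eq] at hUss
        have hUW : U ⊂ W := hUss
        have hUc : U ∈ cand := Finset.mem_filter.2
          ⟨Finset.mem_powerset.2 (hUW.subset.trans hWV),
           HasSubset.Subset.ssubset_of_ne hBU (Ne.symm hUB)⟩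
        have hle : densR A U B ≤ D := Finset.le_sup' (fun U => densR A U B) hUc
        rw [htd, densR_ind hUW.subset hBW.subset]
        rcases lt_or_eq_of_le hle with h | h
        · exact h
        · exfalso
          have hUc2 : U ∈ cand2 := Finset.mem_filter.2 ⟨hUc, h⟩
          have := hWmin U hUc2
          have := Finset.card_lt_card hUW
          omega
      -- apply hbdd to the bottom piece
      have hWsupp : verts (ind A W) ∪ B = W := by rw [← hW'def, hW'eq]
      have hbot := hbdd (ind A W) B ψ'
        (fun e he => hAk e (Finset.mem_filter.1 he).1)
        (by rw [hWsupp]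
            exact le_trans (by exact_mod_cast Finset.card_le_card hWV) hAsize)
        hsb hinj hval
      have hbot1 : (embCount VH H (ind A W) B ψ' : ℝ) ≤ (n : ℝ) ^ (ε ^ 3) := by
        have hexp : (1 - tdensR (ind A W) B / ρF) *
            (((verts (ind A W) ∪ B).card : ℝ) - (B.card : ℝ)) ≤ 0 := by
          apply mul_nonpos_of_nonpos_of_nonneg
          · rw [htd, sub_nonpos]
            rw [le_div_iff₀ hρF]
            linarith
          · rw [hWsupp]; linarith
        have hmax : max 1 ((n : ℝ) ^
            ((1 - tdensR (ind A W) B / ρF) *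
              (((verts (ind A W) ∪ B).card : ℝ) - (B.card : ℝ)))) = 1 := by
          rw [max_eq_left]
          calc (n:ℝ) ^ _ ≤ (n:ℝ) ^ (0:ℝ) := Real.rpow_le_rpow_of_exponent_le hn1 hexp
          _ = 1 := Real.rpow_zero _
        rw [hmax, mul_one] at hbot
        exact hbot
      -- splitting
      set S := (embOmega VH V).filter (embCond VH H A B ψ') with hS
      set r : (ℕ → ℕ) → (ℕ → ℕ) := fun φ v => if v ∈ W then φ v else 0 with hr
      have hScount : embCount VH H A B ψ' = S.card := embCount_eq (le_of_eq hsupB)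
      set msup := (S.image r).sup (fun φ' => ((embOmega VH V).filter (embCond VH H A W φ')).card)
        with hmsup
      set Sbot := (embOmega VH V).filter (embCond VH H (ind A W) B ψ') with hSbot
      have hsupW : verts A ∪ W = V := supp_eq (hIB.trans hBW.subset) hWV
      have himg : S.image r ⊆ Sbot := by
        intro φ' hφ'
        rw [Finset.mem_image] at hφ'
        obtain ⟨φ, hφ, rfl⟩ := hφ'
        exact split_bot hBW.subset hsupB hWV hWsupp hφ
      have hsplit : S.card ≤ msup * Sbot.card := by
        calc S.card ≤ msup * (S.image r).card := by
              apply Finset.card_le_mul_card_image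
              intro φ' hφ'
              calc (S.filter (fun φ => r φ = φ')).card
                  ≤ ((embOmega VH V).filter (embCond VH H A W φ')).card := by
                    apply Finset.card_le_card
                    intro φ hφ
                    rw [Finset.mem_filter] at hφ
                    have := split_top hBW.subset hsupB hsupW hφ.1
                    rwa [show (fun v => if v ∈ W then φ v else 0) = φ' from hφ.2] at this
                _ ≤ msup := Finset.le_sup (f := fun φ' => ((embOmega VH V).filter (embCond VH H A W φ')).card) hφ'
        _ ≤ msup * Sbot.card := Nat.mul_le_mul_left _ (Finset.card_le_card himg)
      -- bound msup
      have hmsupR : (msup : ℝ) ≤ (n : ℝ) ^ (ε ^ 3 * ((V.card : ℝ) - (W.card : ℝ))) := by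
        rcases Finset.eq_empty_or_nonempty (S.image r) with hemp | hnemp
        · rw [hmsup, hemp]
          simp only [Finset.sup_empty]
          norm_num
          positivity
        · obtain ⟨φ', hφ'mem, hφ'eq⟩ := Finset.exists_mem_eq_sup (S.image r) hnemp
            (fun φ' => ((embOmega VH V).filter (embCond VH H A W φ')).card)
          have hφ'bot := himg hφ'mem
          rw [hSbot, Finset.mem_filter] at hφ'bot
          have hcond := hφ'bot.2
          rw [embCond, hWsupp] at hcond
          have hIW : I ⊆ W := hIB.trans hBW.subset
          have hdcard : V.card - W.card ≤ d := by
            have := Finset.card_le_card hWV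
            omega
          have := ih W hIW hWV hdcard φ' hcond.1 hcond.2.1
          rw [embCount_eq (V := V) (le_of_eq hsupW)] at this
          rw [hmsup, hφ'eq]
          exact this
      -- combine
      rw [hScount]
      calc (S.card : ℝ) ≤ (msup : ℝ) * (Sbot.card : ℝ) := by exact_mod_cast hsplit
      _ ≤ (n : ℝ) ^ (ε ^ 3 * ((V.card : ℝ) - (W.card : ℝ))) * (n : ℝ) ^ (ε ^ 3) := by
          apply mul_le_mul hmsupR _ (Nat.cast_nonneg _) (Real.rpow_nonneg hn0.le _)
          rw [← hScount] at *
          rw [hSbot, ← embCount_eq (by rw [hWsupp]; exact hWV)]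
          exact hbot1
      _ = (n : ℝ) ^ (ε ^ 3 * ((V.card : ℝ) - (W.card : ℝ)) + ε ^ 3) := by
          rw [← Real.rpow_add hn0]
      _ ≤ (n : ℝ) ^ (ε ^ 3 * ((V.card : ℝ) - (B.card : ℝ))) := by
          apply Real.rpow_le_rpow_of_exponent_le hn1
          have hwb : (B.card : ℝ) + 1 ≤ (W.card : ℝ) := by exact_mod_cast hcardBW
          nlinarith [pow_nonneg hε.le 3]
  -- conclude
  have h1 := main V.card I Finset.Subset.rfl hIV (by omega) ψ hψ hψV
  refine ⟨h1, le_trans h1 ?_⟩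
  apply Real.rpow_le_rpow_of_exponent_le hn1
  have hiv : (I.card : ℝ) ≤ (V.card : ℝ) := by exact_mod_cast Finset.card_le_card hIV
  have h2 : (V.card : ℝ) - (I.card : ℝ) ≤ 1 / ε := by
    have : (0:ℝ) ≤ (I.card : ℝ) := Nat.cast_nonneg _
    linarith [hAsize]
  have h3 : ε * ((V.card : ℝ) - (I.card : ℝ)) ≤ 1 := by
    calc ε * ((V.card : ℝ) - (I.card : ℝ)) ≤ ε * (1 / ε) :=
          mul_le_mul_of_nonneg_left h2 hε.le
    _ = 1 := by field_simp
  nlinarith [sq_nonneg ε, hε.le]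
end
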